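/- Let P be a probability measure on a measurable space Ω, let η : Ω → [0,1] be measurable, let ε ≥ 0, and let {A_1,…,A_k} and {A′_1,…,A′_k} be two finite measurable partitions of Ω with P(A_j) > 0, P(A′_j) > 0, and P(A_j △ A′_j) ≤ ε for every j. With p_j = (∫_{A_j} η dP)/P(A_j) and p′_j = (∫_{A′_j} η dP)/P(A′_j), it holds that |Σ_{j=1}^k P(A_j) · 2 p_j (1 − p_j) − Σ_{j=1}^k P(A′_j) · 2 p′_j (1 − p′_j)| ≤ 5 k ε. -/

import Mathlib

/-!
The impurity of a leaf, `P(A) · gini(p_A)`, is a function of the two numbers `a = P(A)` and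
`I = ∫_A η dP` with `0 ≤ I ≤ a`. Writing `q = I / a`, it equals `a · gini q`, and
`a · gini q - a' · gini q' = (a - a') · gini q + 2 ((a' - a) q + (I - I')) (1 - q - q')`,
so it is `5`-Lipschitz in `(a, I)` for the max-norm. Both `a` and `I` move by at most
`P(A △ A')` when `A` is replaced by `A'`, since `0 ≤ η ≤ 1`; summing over the `k` leaves
gives `5kε`.
-/

open MeasureTheory
open scoped symmDiff

noncomputable section

def gini (q : ℝ) : ℝ := 2 * q * (1 - q)

def condMean {Ω : Type*} [MeasurableSpace Ω] (μ : Measure Ω) (η : Ω → ℝ) (S : Set Ω) : ℝ :=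
  (∫ x in S, η x ∂μ) / μ.real S

lemma abs_gini_le_of_mem_Icc {q : ℝ} (hq : q ∈ Set.Icc (0 : ℝ) 1) : |gini q| ≤ 1 / 2 := by
  unfold gini
  rw [abs_le]
  constructor <;> nlinarith [hq.1, hq.2, sq_nonneg (2 * q - 1)]

lemma div_mem_Icc_of_mem_Icc {I a : ℝ} (hI : I ∈ Set.Icc 0 a) : I / a ∈ Set.Icc (0 : ℝ) 1 :=
  ⟨div_nonneg hI.1 (hI.1.trans hI.2), div_le_one_of_le₀ hI.2 (hI.1.trans hI.2)⟩

lemma mul_div_cancel_of_mem_Icc {I a : ℝ} (hI : I ∈ Set.Icc 0 a) : a * (I / a) = I := by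
  rcases (hI.1.trans hI.2).eq_or_lt with ha | ha
  · rw [← ha, zero_mul]
    exact (le_antisymm (ha ▸ hI.2) hI.1).symm
  · exact mul_div_cancel₀ I ha.ne'

lemma abs_mul_gini_div_sub_le {a a' I I' δ : ℝ} (hI : I ∈ Set.Icc 0 a) (hI' : I' ∈ Set.Icc 0 a')
    (ha : |a - a'| ≤ δ) (hIδ : |I - I'| ≤ δ) :
    |a * gini (I / a) - a' * gini (I' / a')| ≤ 5 * δ := by
  set q := I / a
  set q' := I' / a'
  have hq := div_mem_Icc_of_mem_Icc hI
  have hq' := div_mem_Icc_of_mem_Icc hI'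
  have hδ : 0 ≤ δ := (abs_nonneg _).trans ha
  have key : a * gini q - a' * gini q' =
      (a - a') * gini q + 2 * ((a' - a) * q + (I - I')) * (1 - (q + q')) := by
    rw [← mul_div_cancel_of_mem_Icc hI, ← mul_div_cancel_of_mem_Icc hI']
    unfold gini
    ring
  have hmid : |(a' - a) * q + (I - I')| ≤ 2 * δ := by
    calc |(a' - a) * q + (I - I')| ≤ |a' - a| * |q| + |I - I'| := by
          rw [← abs_mul]; exact abs_add_le _ _
      _ ≤ δ * 1 + δ := by
          rw [abs_sub_comm, abs_of_nonneg hq.1]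
          gcongr
          exacts [hq.1, hq.2]
      _ = 2 * δ := by ring
  have hlast : |1 - (q + q')| ≤ 1 := by
    rw [abs_le]; constructor <;> linarith [hq.1, hq.2, hq'.1, hq'.2]
  calc |a * gini q - a' * gini q'|
      ≤ |a - a'| * |gini q| + 2 * |(a' - a) * q + (I - I')| * |1 - (q + q')| := by
        rw [key, ← abs_two, ← abs_mul, ← abs_mul, ← abs_mul, abs_two]
        exact abs_add_le _ _
    _ ≤ δ * (1 / 2) + 2 * (2 * δ) * 1 := by
        gcongr
        exact abs_gini_le_of_mem_Icc hq
    _ ≤ 5 * δ := by linarith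

lemma norm_setIntegral_sub_setIntegral_le {α E : Type*} [MeasurableSpace α]
    [NormedAddCommGroup E] [NormedSpace ℝ E] {μ : Measure α} [IsFiniteMeasure μ]
    {f : α → E} (hf : Integrable f μ) {C : ℝ} (hC : ∀ x, ‖f x‖ ≤ C)
    {S T : Set α} (hS : MeasurableSet S) (hT : MeasurableSet T) :
    ‖∫ x in S, f x ∂μ - ∫ x in T, f x ∂μ‖ ≤ C * μ.real (S ∆ T) := by
  have hsplit : ∫ x in S, f x ∂μ - ∫ x in T, f x ∂μ
      = ∫ x in S \ T, f x ∂μ - ∫ x in T \ S, f x ∂μ := by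
    rw [← integral_inter_add_sdiff hT hf.integrableOn,
      ← integral_inter_add_sdiff hS (hf.integrableOn (s := T)), Set.inter_comm T S]
    abel
  have hbound (U : Set α) : ‖∫ x in U, f x ∂μ‖ ≤ C * μ.real U :=
    norm_setIntegral_le_of_norm_le_const (measure_lt_top μ U) fun x _ => hC x
  calc ‖∫ x in S, f x ∂μ - ∫ x in T, f x ∂μ‖
      ≤ ‖∫ x in S \ T, f x ∂μ‖ + ‖∫ x in T \ S, f x ∂μ‖ := hsplit ▸ norm_sub_le _ _
    _ ≤ C * μ.real (S \ T) + C * μ.real (T \ S) := add_le_add (hbound _) (hbound _)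
    _ = C * μ.real (S ∆ T) := by rw [measureReal_symmDiff_eq hS hT, mul_add]

lemma abs_mul_gini_condMean_sub_le {Ω : Type*} [MeasurableSpace Ω] (μ : Measure Ω)
    [IsFiniteMeasure μ] {η : Ω → ℝ} (hη : Measurable η) (hη01 : ∀ x, η x ∈ Set.Icc (0 : ℝ) 1)
    {S T : Set Ω} (hS : MeasurableSet S) (hT : MeasurableSet T) :
    |μ.real S * gini (condMean μ η S) - μ.real T * gini (condMean μ η T)|
      ≤ 5 * μ.real (S ∆ T) := by
  have hnorm (x : Ω) : ‖η x‖ ≤ 1 := by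
    rw [Real.norm_eq_abs, abs_le]
    exact ⟨by linarith [(hη01 x).1], (hη01 x).2⟩
  have hint : Integrable η μ :=
    (integrable_const (1 : ℝ)).mono' hη.aestronglyMeasurable (ae_of_all μ hnorm)
  have hmass (U : Set Ω) (hU : MeasurableSet U) : ∫ x in U, η x ∂μ ∈ Set.Icc 0 (μ.real U) := by
    refine ⟨setIntegral_nonneg hU fun x _ => (hη01 x).1, ?_⟩
    simpa using setIntegral_mono_on hint.integrableOn (integrable_const (1 : ℝ)).integrableOn hU
      fun x _ => (hη01 x).2
  refine abs_mul_gini_div_sub_le (hmass S hS) (hmass T hT) ?_ ?_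
  · exact abs_measureReal_sub_le_measureReal_symmDiff hS.nullMeasurableSet hT.nullMeasurableSet
  · simpa using norm_setIntegral_sub_setIntegral_le hint hnorm hS hT

end

theorem stmt4_general {Ω : Type*} [MeasurableSpace Ω] (P : Measure Ω) [IsProbabilityMeasure P]
    (η : Ω → ℝ) (hη : Measurable η) (hη01 : ∀ x, η x ∈ Set.Icc (0 : ℝ) 1)
    (k : ℕ) (A A' : Fin k → Set Ω)
    (hA : ∀ j, MeasurableSet (A j)) (hA' : ∀ j, MeasurableSet (A' j))
    (ε : ℝ) (hε : 0 ≤ ε)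
    (hclose : ∀ j, P (symmDiff (A j) (A' j)) ≤ ENNReal.ofReal ε)
    (p p' : Fin k → ℝ)
    (hp : ∀ j, p j = (∫ x in A j, η x ∂P) / (P (A j)).toReal)
    (hp' : ∀ j, p' j = (∫ x in A' j, η x ∂P) / (P (A' j)).toReal) :
    |∑ j, (P (A j)).toReal * (2 * p j * (1 - p j))
        - ∑ j, (P (A' j)).toReal * (2 * p' j * (1 - p' j))| ≤ 5 * k * ε := by
  have hleaf (j : Fin k) : |(P (A j)).toReal * (2 * p j * (1 - p j))
      - (P (A' j)).toReal * (2 * p' j * (1 - p' j))| ≤ 5 * ε := by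
    rw [hp j, hp' j]
    refine (abs_mul_gini_condMean_sub_le P hη hη01 (hA j) (hA' j)).trans ?_
    gcongr
    exact ENNReal.toReal_le_of_le_ofReal hε (hclose j)
  calc _ = |∑ j, ((P (A j)).toReal * (2 * p j * (1 - p j))
          - (P (A' j)).toReal * (2 * p' j * (1 - p' j)))| := by rw [Finset.sum_sub_distrib]
    _ ≤ ∑ j, |(P (A j)).toReal * (2 * p j * (1 - p j))
          - (P (A' j)).toReal * (2 * p' j * (1 - p' j))| := Finset.abs_sum_le_sum_abs _ _
    _ ≤ ∑ _j : Fin k, 5 * ε := Finset.sum_le_sum fun j _ => hleaf j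
    _ = 5 * k * ε := by simp; ring

/-- Technical Lemma 2: two trees (finite measurable partitions) whose corresponding leaf
nodes differ by at most `ε` in probability have tree impurities differing by at most `5kε`. -/
theorem stmt4 {Ω : Type*} [MeasurableSpace Ω] (P : Measure Ω) [IsProbabilityMeasure P]
    (η : Ω → ℝ) (hη : Measurable η) (hη01 : ∀ x, η x ∈ Set.Icc (0 : ℝ) 1)
    (k : ℕ) (A A' : Fin k → Set Ω)
    (hA : ∀ j, MeasurableSet (A j)) (hA' : ∀ j, MeasurableSet (A' j))
    (hdisj : Pairwise (Function.onFun Disjoint A)) (hcover : (⋃ j, A j) = Set.univ)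
    (hdisj' : Pairwise (Function.onFun Disjoint A')) (hcover' : (⋃ j, A' j) = Set.univ)
    (hpos : ∀ j, 0 < P (A j)) (hpos' : ∀ j, 0 < P (A' j))
    (ε : ℝ) (hε : 0 ≤ ε)
    (hclose : ∀ j, P (symmDiff (A j) (A' j)) ≤ ENNReal.ofReal ε)
    (p p' : Fin k → ℝ)
    (hp : ∀ j, p j = (∫ x in A j, η x ∂P) / (P (A j)).toReal)
    (hp' : ∀ j, p' j = (∫ x in A' j, η x ∂P) / (P (A' j)).toReal) :
    |∑ j, (P (A j)).toReal * (2 * p j * (1 - p j))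
        - ∑ j, (P (A' j)).toReal * (2 * p' j * (1 - p' j))| ≤ 5 * k * ε :=
  stmt4_general P η hη hη01 k A A' hA hA' ε hε hclose p p' hp hp'
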